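/- Let (G, C) be a complete reflection framework for B and d_1, …, d_n. Then for every vertex v of G and every edge e incident to v, the vector C(v, e) is a real root: C(v, e) ∈ Φ. -/

import Mathlib

open Finset in
/-- The (nonsymmetric) Euler form `E` on `ℝ^n`: `E(αᵢ, αᵢ) = dᵢ` and
`E(αᵢ, αⱼ) = dᵢ · min(Bᵢⱼ, 0)` for `i ≠ j`. -/
def eulerForm {n : ℕ} (B : Matrix (Fin n) (Fin n) ℤ) (d : Fin n → ℤ)
    (x y : Fin n → ℝ) : ℝ :=
  ∑ i : Fin n, ∑ j : Fin n,
    x i * y j * (if i = j then (d i : ℝ) else (d i : ℝ) * min (B i j : ℝ) 0)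

/-- The symmetrized form `(β, γ) = E(β, γ) + E(γ, β)`. -/
def symForm {n : ℕ} (B : Matrix (Fin n) (Fin n) ℤ) (d : Fin n → ℤ)
    (x y : Fin n → ℝ) : ℝ :=
  eulerForm B d x y + eulerForm B d y x

/-- The skew-symmetrized form `ω(β, γ) = E(β, γ) − E(γ, β)`. -/
def omegaForm {n : ℕ} (B : Matrix (Fin n) (Fin n) ℤ) (d : Fin n → ℤ)
    (x y : Fin n → ℝ) : ℝ :=
  eulerForm B d x y - eulerForm B d y x

/-- The simple root `αᵢ`, i.e. the `i`-th standard basis vector of `ℝ^n`. -/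
def simpleRoot {n : ℕ} (i : Fin n) : Fin n → ℝ :=
  fun k => if k = i then 1 else 0

/-- The reflection `t_β : γ ↦ γ − (2(β, γ)/(β, β))·β`, as a self-map of `ℝ^n`. -/
noncomputable def reflTo {n : ℕ} (B : Matrix (Fin n) (Fin n) ℤ) (d : Fin n → ℤ)
    (β : Fin n → ℝ) : Function.End (Fin n → ℝ) :=
  fun γ => γ - (2 * symForm B d β γ / symForm B d β β) • β

/-- The simple reflection `sᵢ = t_{αᵢ}`. -/
noncomputable def simpleRefl {n : ℕ} (B : Matrix (Fin n) (Fin n) ℤ) (d : Fin n → ℤ)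
    (i : Fin n) : Function.End (Fin n → ℝ) :=
  reflTo B d (simpleRoot i)

/-- The Coxeter group `W`: the submonoid of `End(ℝ^n)` generated by the simple
reflections `s₁, …, s_n` (since each `sᵢ` is an involution, this is the subgroup
they generate). -/
def coxeterW {n : ℕ} (B : Matrix (Fin n) (Fin n) ℤ) (d : Fin n → ℤ) :
    Submonoid (Function.End (Fin n → ℝ)) :=
  Submonoid.closure (Set.range (simpleRefl B d))

/-- The set `Φ` of real roots: the vectors `w(αᵢ)` for `w ∈ W` and `1 ≤ i ≤ n`. -/
def realRoots {n : ℕ} (B : Matrix (Fin n) (Fin n) ℤ) (d : Fin n → ℤ) :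
    Set (Fin n → ℝ) :=
  {x | ∃ w ∈ coxeterW B d, ∃ i : Fin n, x = w (simpleRoot i)}

/-- A vector is positive if all of its coordinates are `≥ 0`. -/
def isPosVec {n : ℕ} (x : Fin n → ℝ) : Prop := ∀ k, 0 ≤ x k

/-- A vector is negative if all of its coordinates are `≤ 0`. -/
def isNegVec {n : ℕ} (x : Fin n → ℝ) : Prop := ∀ k, x k ≤ 0

/-- The Coxeter element `s₁ s₂ ⋯ s_n` (product in `End(ℝ^n)`, i.e. composition). -/
noncomputable def coxeterElt {n : ℕ} (B : Matrix (Fin n) (Fin n) ℤ) (d : Fin n → ℤ) :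
    Function.End (Fin n → ℝ) :=
  ((List.finRange n).map (simpleRefl B d)).prod

/-- The image of an integer vector in `ℝ^n`. -/
def toRealVec {n : ℕ} (x : Fin n → ℤ) : Fin n → ℝ := fun i => (x i : ℝ)

/-- Conditions (1)–(3) of Theorem `characterize` for a tuple of integer vectors:
(1) each vector is a real root; (2) the symmetrized form is `≤ 0` on pairs of distinct
vectors which are both positive or both negative; (3) some ordering puts all positive
roots before all negative roots and makes the product of the corresponding reflections
equal to `s₁ s₂ ⋯ s_n`. -/
def cVectorConditions {n : ℕ} (B : Matrix (Fin n) (Fin n) ℤ) (d : Fin n → ℤ)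
    (vs : Fin n → (Fin n → ℤ)) : Prop :=
  (∀ i, toRealVec (vs i) ∈ realRoots B d) ∧
  (∀ i j, i ≠ j →
    ((isPosVec (toRealVec (vs i)) ∧ isPosVec (toRealVec (vs j))) ∨
      (isNegVec (toRealVec (vs i)) ∧ isNegVec (toRealVec (vs j)))) →
    symForm B d (toRealVec (vs i)) (toRealVec (vs j)) ≤ 0) ∧
  (∃ σ : Equiv.Perm (Fin n),
    (∀ i j : Fin n, isPosVec (toRealVec (vs (σ i))) →
      isNegVec (toRealVec (vs (σ j))) → i < j) ∧
    ((List.finRange n).map (fun i => reflTo B d (toRealVec (vs (σ i))))).prod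
      = coxeterElt B d)

/-- A complete reflection framework for `B` and `d`: a connected `n`-regular simple
graph `G` together with an assignment `C(v, e) ∈ ℝ^n` for each vertex `v` and edge
`e ∋ v` (encoded as `C v w` for `w` a neighbour of `v`), satisfying the Base,
Reflection and Euler conditions. -/
structure CompleteReflectionFramework {n : ℕ}
    (B : Matrix (Fin n) (Fin n) ℤ) (d : Fin n → ℤ) where
  /-- The vertex set of the graph `G`. -/
  Vert : Type
  /-- The graph `G`. -/
  G : SimpleGraph Vert
  /-- `G` is connected. -/
  connected : G.Connected
  /-- `G` is `n`-regular. -/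
  regular : ∀ v : Vert, (G.neighborSet v).ncard = n
  /-- The vector `C(v, e)`, where `e` is the edge joining `v` to a neighbour `w`. -/
  C : Vert → Vert → (Fin n → ℝ)
  /-- Base condition: at some vertex `v_b`, the set `C(v_b)` is the set of simple
  roots. -/
  base : ∃ vb : Vert,
    {x | ∃ w, G.Adj vb w ∧ C vb w = x} = {x | ∃ i : Fin n, x = simpleRoot i}
  /-- Reflection condition, first part: `C(v′, e) = −C(v, e)` for an edge `e`
  joining `v` and `v′`. -/
  reflection_neg : ∀ v v' : Vert, G.Adj v v' → C v' v = -(C v v')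
  /-- Reflection condition, second part: for any other edge `f ∋ v` with
  `γ = C(v, f)`, the set `C(v′)` contains `t_β(γ)` if `ω(β, γ) ≥ 0` and contains `γ`
  if `ω(β, γ) < 0`, where `β = C(v, e)`. -/
  reflection : ∀ v v' w : Vert, G.Adj v v' → G.Adj v w → w ≠ v' →
    (0 ≤ omegaForm B d (C v v') (C v w) →
      ∃ u, G.Adj v' u ∧ C v' u = reflTo B d (C v v') (C v w)) ∧
    (omegaForm B d (C v v') (C v w) < 0 →
      ∃ u, G.Adj v' u ∧ C v' u = C v w)
  /-- Euler condition (E1): `E(β, γ) = 0` for `β ∈ C₊(v)` and `γ ∈ C₋(v)`. -/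
  euler1 : ∀ v w w' : Vert, G.Adj v w → G.Adj v w' →
    isPosVec (C v w) → isNegVec (C v w') → eulerForm B d (C v w) (C v w') = 0
  /-- Euler condition (E2): `E(β, γ) ≤ 0` for distinct `β, γ ∈ C(v)` which are both
  positive or both negative. -/
  euler2 : ∀ v w w' : Vert, G.Adj v w → G.Adj v w' → C v w ≠ C v w' →
    ((isPosVec (C v w) ∧ isPosVec (C v w')) ∨
      (isNegVec (C v w) ∧ isNegVec (C v w'))) →
    eulerForm B d (C v w) (C v w') ≤ 0
  /-- Euler condition (E3): the directed graph on `C(v)` with an arrow `β → γ`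
  whenever `β ≠ γ` and `E(β, γ) ≠ 0` has no directed cycle. -/
  euler3 : ∀ (v : Vert) (β : Fin n → ℝ), ¬ Relation.TransGen
    (fun x y : Fin n → ℝ => x ≠ y ∧ (∃ w, G.Adj v w ∧ C v w = x) ∧
      (∃ w, G.Adj v w ∧ C v w = y) ∧ eulerForm B d x y ≠ 0) β β

/-!
The invariant propagated along the connected graph `G` is: the vectors at a vertex are real
roots and distinct edges at it carry distinct vectors. It holds at the base vertex, where
the vectors are the simple roots. Crossing an edge labelled `β = w αᵢ`, the reflection
condition puts into `C(v')` the vector `-β` and the `n - 1` vectors `μ_β(γ)`, where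
`μ_β(γ) = t_β γ` if `ω(β, γ) ≥ 0` and `γ` otherwise. These are real roots because
`t_β = w sᵢ w⁻¹ ∈ W`, and they are pairwise distinct because `t_β` is an involution that
preserves `ω(β, ·)`. As `G` is `n`-regular they exhaust `C(v')`, and the invariant holds
at `v'`.
-/

section

variable {n : ℕ} {B : Matrix (Fin n) (Fin n) ℤ} {d : Fin n → ℤ}

theorem Set.eq_image_and_injOn_of_subset_image {α β : Type*} {f : α → β} {s : Set α}
    {S : Set β} (hs : s.Finite) (hSs : S ⊆ f '' s) (hcard : s.ncard ≤ S.ncard) :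
    S = f '' s ∧ Set.InjOn f s := by
  have himage : (f '' s).ncard ≤ s.ncard := Set.ncard_image_le hs
  have hS : S.ncard ≤ (f '' s).ncard := Set.ncard_le_ncard hSs (hs.image f)
  exact ⟨Set.eq_of_subset_of_ncard_le hSs (by omega) (hs.image f),
    Set.injOn_of_ncard_image_eq (by omega) hs⟩

section Forms

variable (B d) in
def eulerMatrix : Matrix (Fin n) (Fin n) ℝ :=
  Matrix.of fun i j => if i = j then (d i : ℝ) else d i * min (B i j : ℝ) 0

theorem eulerForm_eq_toBilin' (x y : Fin n → ℝ) :
    eulerForm B d x y = Matrix.toBilin' (eulerMatrix B d) x y := by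
  simp only [eulerForm, Matrix.toBilin'_apply, eulerMatrix, Matrix.of_apply]
  exact Finset.sum_congr rfl fun i _ => Finset.sum_congr rfl fun j _ => by ring

theorem symForm_comm (x y : Fin n → ℝ) : symForm B d x y = symForm B d y x :=
  add_comm _ _

theorem symForm_add_right (x y z : Fin n → ℝ) :
    symForm B d x (y + z) = symForm B d x y + symForm B d x z := by
  simp only [symForm, eulerForm_eq_toBilin', map_add, LinearMap.add_apply]; ring

theorem symForm_sub_right (x y z : Fin n → ℝ) :
    symForm B d x (y - z) = symForm B d x y - symForm B d x z := by
  simp only [symForm, eulerForm_eq_toBilin', map_sub, LinearMap.sub_apply]; ring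

theorem symForm_smul_right (c : ℝ) (x y : Fin n → ℝ) :
    symForm B d x (c • y) = c * symForm B d x y := by
  simp only [symForm, eulerForm_eq_toBilin', map_smul, LinearMap.smul_apply, smul_eq_mul]
  ring

theorem symForm_sub_left (x y z : Fin n → ℝ) :
    symForm B d (x - y) z = symForm B d x z - symForm B d y z := by
  simp only [symForm_comm _ z, symForm_sub_right]

theorem symForm_smul_left (c : ℝ) (x y : Fin n → ℝ) :
    symForm B d (c • x) y = c * symForm B d x y := by
  simp only [symForm_comm _ y, symForm_smul_right]

theorem omegaForm_self (x : Fin n → ℝ) : omegaForm B d x x = 0 :=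
  sub_self _

theorem omegaForm_sub_right (x y z : Fin n → ℝ) :
    omegaForm B d x (y - z) = omegaForm B d x y - omegaForm B d x z := by
  simp only [omegaForm, eulerForm_eq_toBilin', map_sub, LinearMap.sub_apply]; ring

theorem omegaForm_smul_right (c : ℝ) (x y : Fin n → ℝ) :
    omegaForm B d x (c • y) = c * omegaForm B d x y := by
  simp only [omegaForm, eulerForm_eq_toBilin', map_smul, LinearMap.smul_apply, smul_eq_mul]
  ring

theorem symForm_simpleRoot_self (i : Fin n) :
    symForm B d (simpleRoot i) (simpleRoot i) = 2 * d i := by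
  have hα : simpleRoot i = Pi.single i (1 : ℝ) := by
    ext k; simp [simpleRoot, Pi.single_apply]
  simp only [symForm, eulerForm_eq_toBilin', hα, Matrix.toBilin'_single, eulerMatrix,
    Matrix.of_apply, if_pos]
  ring

end Forms

section Reflections

theorem reflTo_isLinearMap (β : Fin n → ℝ) : IsLinearMap ℝ (reflTo B d β) where
  map_add x y := by
    simp only [reflTo, symForm_add_right]; module
  map_smul c x := by
    simp only [reflTo, symForm_smul_right]; module

theorem symForm_reflTo_right {β : Fin n → ℝ} (hβ : symForm B d β β ≠ 0) (γ : Fin n → ℝ) :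
    symForm B d β (reflTo B d β γ) = -symForm B d β γ := by
  simp only [reflTo, symForm_sub_right, symForm_smul_right]
  field_simp
  ring

theorem reflTo_reflTo {β : Fin n → ℝ} (hβ : symForm B d β β ≠ 0) (γ : Fin n → ℝ) :
    reflTo B d β (reflTo B d β γ) = γ := by
  conv_lhs => rw [reflTo, symForm_reflTo_right hβ]
  simp only [reflTo, mul_neg, neg_div, neg_smul, sub_neg_eq_add, sub_add_cancel]

theorem reflTo_self {β : Fin n → ℝ} (hβ : symForm B d β β ≠ 0) : reflTo B d β β = -β := by
  simp only [reflTo, mul_div_assoc, div_self hβ]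
  module

theorem symForm_reflTo_reflTo {β : Fin n → ℝ} (hβ : symForm B d β β ≠ 0) (x y : Fin n → ℝ) :
    symForm B d (reflTo B d β x) (reflTo B d β y) = symForm B d x y := by
  simp only [reflTo, symForm_sub_right, symForm_sub_left, symForm_smul_right,
    symForm_smul_left, symForm_comm x β]
  field_simp
  ring

theorem omegaForm_reflTo_right (β γ : Fin n → ℝ) :
    omegaForm B d β (reflTo B d β γ) = omegaForm B d β γ := by
  simp only [reflTo, omegaForm_sub_right, omegaForm_smul_right, omegaForm_self, mul_zero,
    sub_zero]

end Reflections

section CoxeterGroup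

theorem simpleRoot_mem_realRoots (i : Fin n) : simpleRoot i ∈ realRoots B d :=
  ⟨1, one_mem _, i, rfl⟩

variable (B d) in
def symFormIsometries : Submonoid (Function.End (Fin n → ℝ)) where
  carrier := {f | IsLinearMap ℝ f ∧ ∀ x y, symForm B d (f x) (f y) = symForm B d x y}
  mul_mem' := by
    rintro f g ⟨hf, hf'⟩ ⟨hg, hg'⟩
    refine ⟨⟨fun x y => ?_, fun c x => ?_⟩, fun x y => (hf' _ _).trans (hg' x y)⟩
    · change f (g (x + y)) = f (g x) + f (g y)
      rw [hg.map_add, hf.map_add]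
    · change f (g (c • x)) = c • f (g x)
      rw [hg.map_smul, hf.map_smul]
  one_mem' := ⟨⟨fun _ _ => rfl, fun _ _ => rfl⟩, fun _ _ => rfl⟩

theorem reflTo_mem_symFormIsometries {β : Fin n → ℝ} (hβ : symForm B d β β ≠ 0) :
    reflTo B d β ∈ symFormIsometries B d :=
  ⟨reflTo_isLinearMap β, symForm_reflTo_reflTo hβ⟩

theorem reflTo_map_map {f : Function.End (Fin n → ℝ)} (hf : f ∈ symFormIsometries B d)
    (β x : Fin n → ℝ) : reflTo B d (f β) (f x) = f (reflTo B d β x) := by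
  simp only [reflTo, hf.1.map_sub, hf.1.map_smul, hf.2]

theorem symForm_simpleRoot_self_ne_zero (hd : ∀ i, 0 < d i) (i : Fin n) :
    symForm B d (simpleRoot i) (simpleRoot i) ≠ 0 := by
  rw [symForm_simpleRoot_self]
  have := hd i
  positivity

theorem coxeterW_le_symFormIsometries (hd : ∀ i, 0 < d i) :
    coxeterW B d ≤ symFormIsometries B d :=
  Submonoid.closure_le.2 <| Set.range_subset_iff.2 fun i =>
    reflTo_mem_symFormIsometries (symForm_simpleRoot_self_ne_zero hd i)

theorem simpleRefl_mul_self (hd : ∀ i, 0 < d i) (i : Fin n) :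
    simpleRefl B d i * simpleRefl B d i = 1 :=
  funext (reflTo_reflTo (symForm_simpleRoot_self_ne_zero hd i))

theorem exists_mul_eq_one_of_mem_coxeterW (hd : ∀ i, 0 < d i)
    {w : Function.End (Fin n → ℝ)} (hw : w ∈ coxeterW B d) : ∃ w' ∈ coxeterW B d, w * w' = 1 := by
  induction hw using Submonoid.closure_induction with
  | mem _ hs =>
    obtain ⟨i, rfl⟩ := hs
    exact ⟨_, Submonoid.subset_closure ⟨i, rfl⟩, simpleRefl_mul_self hd i⟩
  | one => exact ⟨1, one_mem _, one_mul 1⟩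
  | mul x y _ _ hx hy =>
    obtain ⟨x', hx', hxx'⟩ := hx
    obtain ⟨y', hy', hyy'⟩ := hy
    refine ⟨y' * x', mul_mem hy' hx', ?_⟩
    rw [mul_assoc, ← mul_assoc y, hyy', one_mul, hxx']

theorem reflTo_mem_coxeterW (hd : ∀ i, 0 < d i) {β : Fin n → ℝ} (hβ : β ∈ realRoots B d) :
    reflTo B d β ∈ coxeterW B d := by
  obtain ⟨w, hw, i, rfl⟩ := hβ
  obtain ⟨w', hw', hww'⟩ := exists_mul_eq_one_of_mem_coxeterW hd hw
  suffices reflTo B d (w (simpleRoot i)) = w * simpleRefl B d i * w' by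
    rw [this]
    exact mul_mem (mul_mem hw (Submonoid.subset_closure ⟨i, rfl⟩)) hw'
  funext x
  conv_lhs => rw [← show w (w' x) = x from congrFun hww' x]
  exact reflTo_map_map (coxeterW_le_symFormIsometries hd hw) _ _

theorem reflTo_mem_realRoots (hd : ∀ i, 0 < d i) {β γ : Fin n → ℝ}
    (hβ : β ∈ realRoots B d) (hγ : γ ∈ realRoots B d) : reflTo B d β γ ∈ realRoots B d := by
  obtain ⟨u, hu, j, rfl⟩ := hγ
  exact ⟨reflTo B d β * u, mul_mem (reflTo_mem_coxeterW hd hβ) hu, j, rfl⟩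

theorem symForm_self_ne_zero_of_mem_realRoots (hd : ∀ i, 0 < d i) {β : Fin n → ℝ}
    (hβ : β ∈ realRoots B d) : symForm B d β β ≠ 0 := by
  obtain ⟨w, hw, i, rfl⟩ := hβ
  rw [(coxeterW_le_symFormIsometries hd hw).2]
  exact symForm_simpleRoot_self_ne_zero hd i

theorem neg_mem_realRoots (hd : ∀ i, 0 < d i) {β : Fin n → ℝ} (hβ : β ∈ realRoots B d) :
    -β ∈ realRoots B d :=
  reflTo_self (symForm_self_ne_zero_of_mem_realRoots hd hβ) ▸ reflTo_mem_realRoots hd hβ hβ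

end CoxeterGroup

section Mutation

variable (B d) in
noncomputable def mutateRoot (β γ : Fin n → ℝ) : Fin n → ℝ :=
  if 0 ≤ omegaForm B d β γ then reflTo B d β γ else γ

theorem mutateRoot_mem_realRoots (hd : ∀ i, 0 < d i) {β γ : Fin n → ℝ}
    (hβ : β ∈ realRoots B d) (hγ : γ ∈ realRoots B d) : mutateRoot B d β γ ∈ realRoots B d := by
  unfold mutateRoot
  split_ifs
  exacts [reflTo_mem_realRoots hd hβ hγ, hγ]

-- `t_β` preserves `ω(β, ·)`, so both branches keep the sign of `ω(β, γ)`.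
theorem mutateRoot_injective {β : Fin n → ℝ} (hβ : symForm B d β β ≠ 0) :
    Function.Injective (mutateRoot B d β) := by
  intro γ₁ γ₂ h
  unfold mutateRoot at h
  split_ifs at h with h₁ h₂ h₂
  · simpa only [reflTo_reflTo hβ] using congrArg (reflTo B d β) h
  · exact absurd (h ▸ omegaForm_reflTo_right β γ₁ ▸ h₁) h₂
  · exact absurd (h ▸ omegaForm_reflTo_right β γ₂ ▸ h₂) h₁
  · exact h

theorem eq_of_mutateRoot_eq_neg {β γ : Fin n → ℝ} (hβ : symForm B d β β ≠ 0)
    (h : mutateRoot B d β γ = -β) : γ = β := by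
  have hneg : mutateRoot B d β β = -β := by
    simp only [mutateRoot, omegaForm_self, le_refl, if_true, reflTo_self hβ]
  exact mutateRoot_injective hβ (h.trans hneg.symm)

end Mutation

namespace CompleteReflectionFramework

variable (F : CompleteReflectionFramework B d)

def IsRootVertex (v : F.Vert) : Prop :=
  Set.InjOn (F.C v) (F.G.neighborSet v) ∧ F.C v '' F.G.neighborSet v ⊆ realRoots B d

theorem finite_neighborSet (hn : 1 ≤ n) (v : F.Vert) : (F.G.neighborSet v).Finite :=
  Set.finite_of_ncard_pos (by rwa [F.regular v])

theorem isRootVertex_of_subset_image (hn : 1 ≤ n) {v : F.Vert} {S : Set (Fin n → ℝ)}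
    (hSC : S ⊆ F.C v '' F.G.neighborSet v) (hcard : n ≤ S.ncard) (hS : S ⊆ realRoots B d) :
    F.IsRootVertex v := by
  obtain ⟨himage, hinj⟩ := Set.eq_image_and_injOn_of_subset_image (F.finite_neighborSet hn v)
    hSC (by rwa [F.regular v])
  exact ⟨hinj, himage ▸ hS⟩

theorem exists_isRootVertex (hn : 1 ≤ n) : ∃ v, F.IsRootVertex v := by
  obtain ⟨vb, hvb⟩ := F.base
  refine ⟨vb, F.isRootVertex_of_subset_image hn (S := Set.range simpleRoot) ?_ ?_ ?_⟩
  · rintro _ ⟨i, rfl⟩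
    exact (Set.ext_iff.1 hvb _).2 ⟨i, rfl⟩
  · rw [Set.ncard_range_of_injective fun i j hij => by simpa [simpleRoot] using congrFun hij i,
      Nat.card_eq_fintype_card, Fintype.card_fin]
  · rintro _ ⟨i, rfl⟩
    exact simpleRoot_mem_realRoots i

theorem mutateRoot_mem_image {v v' w : F.Vert} (hv' : F.G.Adj v v') (hw : F.G.Adj v w)
    (hne : w ≠ v') :
    mutateRoot B d (F.C v v') (F.C v w) ∈ F.C v' '' F.G.neighborSet v' := by
  obtain ⟨hrefl, hkeep⟩ := F.reflection v v' w hv' hw hne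
  unfold mutateRoot
  split_ifs with hω
  exacts [hrefl hω, hkeep (not_le.1 hω)]

theorem IsRootVertex.of_adj {F : CompleteReflectionFramework B d} (hn : 1 ≤ n)
    (hd : ∀ i, 0 < d i) {v v' : F.Vert}
    (hv : F.IsRootVertex v) (hadj : F.G.Adj v v') : F.IsRootVertex v' := by
  set β := F.C v v'
  have hβ : β ∈ realRoots B d := hv.2 ⟨v', hadj, rfl⟩
  have hββ := symForm_self_ne_zero_of_mem_realRoots hd hβ
  have hfin : (F.G.neighborSet v \ {v'}).Finite := (F.finite_neighborSet hn v).sdiff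
  have hinj : Set.InjOn (mutateRoot B d β ∘ F.C v) (F.G.neighborSet v \ {v'}) :=
    (mutateRoot_injective hββ).comp_injOn (hv.1.mono Set.sdiff_subset)
  have hneg : -β ∉ (mutateRoot B d β ∘ F.C v) '' (F.G.neighborSet v \ {v'}) := by
    rintro ⟨w, ⟨hw, hne⟩, hwβ⟩
    exact hne (hv.1 hw hadj (eq_of_mutateRoot_eq_neg hββ hwβ))
  refine F.isRootVertex_of_subset_image hn
    (S := insert (-β) ((mutateRoot B d β ∘ F.C v) '' (F.G.neighborSet v \ {v'}))) ?_ ?_ ?_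
  · rintro _ (rfl | ⟨w, ⟨hw, hne⟩, rfl⟩)
    · exact ⟨v, hadj.symm, F.reflection_neg v v' hadj⟩
    · exact F.mutateRoot_mem_image hadj hw hne
  · rw [Set.ncard_insert_of_notMem hneg (hfin.image _), hinj.ncard_image,
      Set.ncard_sdiff_singleton_add_one (show v' ∈ F.G.neighborSet v from hadj)
        (F.finite_neighborSet hn v), F.regular v]
  · rintro _ (rfl | ⟨w, ⟨hw, -⟩, rfl⟩)
    · exact neg_mem_realRoots hd hβ
    · exact mutateRoot_mem_realRoots hd hβ (hv.2 ⟨w, hw, rfl⟩)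

theorem IsRootVertex.of_reachable {F : CompleteReflectionFramework B d} (hn : 1 ≤ n)
    (hd : ∀ i, 0 < d i) {u v : F.Vert}
    (hu : F.IsRootVertex u) (huv : F.G.Reachable u v) : F.IsRootVertex v := by
  obtain ⟨p⟩ := huv
  induction p with
  | nil => exact hu
  | cons hadj _ ih => exact ih (hu.of_adj hn hd hadj)

end CompleteReflectionFramework

end

theorem framework_vectors_are_roots_general (n : ℕ) (hn : 1 ≤ n)
    (B : Matrix (Fin n) (Fin n) ℤ) (d : Fin n → ℤ) (hd : ∀ i, 0 < d i)
    (F : CompleteReflectionFramework B d)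
    (v w : F.Vert) (h : F.G.Adj v w) :
    F.C v w ∈ realRoots B d := by
  obtain ⟨vb, hvb⟩ := F.exists_isRootVertex hn
  exact (hvb.of_reachable hn hd (F.connected vb v)).2 ⟨w, h, rfl⟩

/-- In a complete reflection framework, every vector `C(v, e)` is a real root. -/
theorem framework_vectors_are_roots (n : ℕ) (hn : 1 ≤ n)
    (B : Matrix (Fin n) (Fin n) ℤ) (d : Fin n → ℤ) (hd : ∀ i, 0 < d i)
    (hskew : ∀ i j, d i * B i j = -(d j * B j i))
    (hacyclic : ∀ i j : Fin n, i < j → 0 ≤ B i j)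
    (F : CompleteReflectionFramework B d)
    (v w : F.Vert) (h : F.G.Adj v w) :
    F.C v w ∈ realRoots B d :=
  framework_vectors_are_roots_general n hn B d hd F v w h
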